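/- arXiv:nlin/0410066 — 2 statements merged into one kernel-verified Lean document; each statement's English description precedes it below -/
import Mathlib

section
/- Let A = {(x,y) ∈ T² : y ∈ [0,π)} and let α/π be irrational. Then for every nonzero integer n, μ(A ∩ T^{-n}A) = μ(A)² = 1/4, i.e. the partition {A, A^c} is pairwise independent under T. -/
open MeasureTheory Real Set

noncomputable instance : Fact (0 < 2 * π) := ⟨by positivity⟩

namespace PIPaux

abbrev 𝕋 := AddCircle (2 * π)

noncomputable def I : Set 𝕋 := (fun t : ℝ => (t : 𝕋)) '' Set.Ico 0 π

lemma coe_rep (z : 𝕋) : ((AddCircle.equivIco (2*π) 0 z : ℝ) : 𝕋) = z :=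
  (AddCircle.equivIco (2*π) 0).symm_apply_apply z

lemma rep_mem (z : 𝕋) : (AddCircle.equivIco (2*π) 0 z : ℝ) ∈ Ico (0:ℝ) (0 + 2*π) :=
  (AddCircle.equivIco (2*π) 0 z).2

lemma mem_I_iff {x : ℝ} (hx : x ∈ Ico (0:ℝ) (2*π)) : (x : 𝕋) ∈ I ↔ x < π := by
  have hπ := pi_pos
  constructor
  · rintro ⟨t, ht, hte⟩
    have h1 : t ∈ Ico (0:ℝ) (0 + 2*π) := ⟨ht.1, by linarith [ht.2]⟩
    have h2 : x ∈ Ico (0:ℝ) (0 + 2*π) := ⟨hx.1, by simpa using hx.2⟩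
    have := (AddCircle.coe_eq_coe_iff_of_mem_Ico h1 h2).mp hte
    rw [← this]; exact ht.2
  · intro h; exact ⟨x, ⟨hx.1, h⟩, rfl⟩

lemma mem_I_iff' (z : 𝕋) : z ∈ I ↔ (AddCircle.equivIco (2*π) 0 z : ℝ) < π := by
  conv_lhs => rw [← coe_rep z]
  exact mem_I_iff (by simpa using rep_mem z)

lemma measurableSet_I : MeasurableSet I := by
  have h : I = (AddCircle.measurableEquivIco (2*π) 0) ⁻¹' {s | (s : ℝ) < π} := by
    ext z; exact mem_I_iff' z
  rw [h]
  exact (AddCircle.measurableEquivIco (2*π) 0).measurable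
    (measurable_subtype_coe measurableSet_Iio)

lemma volume_I : volume I = ENNReal.ofReal π := by
  have hπ := pi_pos
  have hIc : ((π : 𝕋) + ·) ⁻¹' I = Iᶜ := by
    ext z
    obtain ⟨hx0, hx2⟩ := rep_mem z
    set x : ℝ := (AddCircle.equivIco (2*π) 0 z : ℝ) with hxdef
    rw [zero_add] at hx2
    simp only [mem_preimage, mem_compl_iff]
    rw [mem_I_iff' z, ← hxdef]
    have hz : ((x : ℝ) : 𝕋) = z := coe_rep z
    have hπz : (π : 𝕋) + z = ((π + x : ℝ) : 𝕋) := by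
      rw [← hz, AddCircle.coe_add]
    rcases lt_or_ge x π with h | h
    · rw [hπz, mem_I_iff ⟨by linarith, by linarith⟩]
      exact iff_of_false (by linarith) (not_not_intro h)
    · have hshift : ((π + x : ℝ) : 𝕋) = ((x - π : ℝ) : 𝕋) := by
        rw [show (π+x:ℝ) = (x-π) + 2*π by ring, AddCircle.coe_add_period]
      rw [hπz, hshift, mem_I_iff ⟨by linarith, by linarith⟩]
      exact iff_of_true (by linarith) (by linarith)
  have h1 : volume (((π : 𝕋) + ·) ⁻¹' I) = volume I := measure_preimage_add volume _ I
  have h2 := measure_add_measure_compl (μ := volume) measurableSet_I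
  rw [← hIc, h1, AddCircle.measure_univ] at h2
  have h3 : ENNReal.ofReal (2*π) = ENNReal.ofReal π + ENNReal.ofReal π := by
    rw [← ENNReal.ofReal_add pi_pos.le pi_pos.le]; ring_nf
  rw [h3, ← two_mul, ← two_mul] at h2
  exact (ENNReal.mul_right_inj two_ne_zero (by norm_num)).mp h2


lemma key (m : ℤ) (hm : m ≠ 0) (c : 𝕋) :
    ((volume : Measure 𝕋).prod volume) {p : 𝕋 × 𝕋 | p.2 ∈ I ∧ m • p.1 + c + p.2 ∈ I}
      = ENNReal.ofReal π * ENNReal.ofReal π := by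
  have hC : MeasurableSet {p : 𝕋 × 𝕋 | p.2 ∈ I ∧ p.1 + p.2 ∈ I} :=
    (measurable_snd measurableSet_I).inter
      ((measurable_fst.add measurable_snd) measurableSet_I)
  have hS : MeasurePreserving (fun p : 𝕋 × 𝕋 => (m • p.1 + c, p.2))
      ((volume : Measure 𝕋).prod volume) ((volume : Measure 𝕋).prod volume) :=
    ((measurePreserving_add_right volume c).comp
      (Measure.measurePreserving_zsmul volume hm)).prod (MeasurePreserving.id volume)
  have hpre : {p : 𝕋 × 𝕋 | p.2 ∈ I ∧ m • p.1 + c + p.2 ∈ I}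
      = (fun p : 𝕋 × 𝕋 => (m • p.1 + c, p.2)) ⁻¹' {p : 𝕋 × 𝕋 | p.2 ∈ I ∧ p.1 + p.2 ∈ I} := rfl
  rw [hpre, hS.measure_preimage hC.nullMeasurableSet, Measure.prod_apply_symm hC]
  have hint : ∀ y : 𝕋, volume ((fun x => (x, y)) ⁻¹' {p : 𝕋 × 𝕋 | p.2 ∈ I ∧ p.1 + p.2 ∈ I})
      = I.indicator (fun _ => ENNReal.ofReal π) y := by
    intro y
    by_cases hy : y ∈ I
    · have he : (fun x : 𝕋 => (x, y)) ⁻¹' {p : 𝕋 × 𝕋 | p.2 ∈ I ∧ p.1 + p.2 ∈ I}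
          = (· + y) ⁻¹' I := by ext x; simp [hy]
      rw [he, measure_preimage_add_right volume y I, volume_I, indicator_of_mem hy]
    · have he : (fun x : 𝕋 => (x, y)) ⁻¹' {p : 𝕋 × 𝕋 | p.2 ∈ I ∧ p.1 + p.2 ∈ I} = ∅ := by
        ext x; simp [hy]
      rw [he, measure_empty, indicator_of_notMem hy]
  rw [lintegral_congr hint, lintegral_indicator_const measurableSet_I, volume_I, mul_comm]


lemma iterate_formula (θ : 𝕋) (n : ℕ) : ∃ c : 𝕋, ∀ p : 𝕋 × 𝕋,
    (fun p : 𝕋 × 𝕋 => (p.1 + θ, p.2 + p.1))^[n] p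
      = (p.1 + (n : ℤ) • θ, p.2 + (n : ℤ) • p.1 + c) := by
  induction n with
  | zero => exact ⟨0, fun p => by simp⟩
  | succ k ih =>
    obtain ⟨c, hc⟩ := ih
    refine ⟨(k : ℤ) • θ + c, fun p => ?_⟩
    rw [Function.iterate_succ_apply, hc]
    show ((p.1 + θ) + (k:ℤ) • θ, (p.2 + p.1) + (k:ℤ) • (p.1 + θ) + c) = _
    have h1 : ((k+1 : ℕ) : ℤ) = (k : ℤ) + 1 := by push_cast; ring
    rw [Prod.mk.injEq]
    constructor
    · rw [h1, add_smul, one_smul]; abel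
    · rw [h1, add_smul, one_smul, smul_add]; abel

lemma arith : (ENNReal.ofReal (4 * π ^ 2))⁻¹ * (ENNReal.ofReal π * ENNReal.ofReal π)
    = 1 / 4 := by
  have hπ := pi_pos
  rw [← ENNReal.ofReal_mul hπ.le,
    show (4 : ℝ) * π ^ 2 = 4 * (π * π) by ring,
    ENNReal.ofReal_mul (by norm_num : (0:ℝ) ≤ 4),
    ENNReal.mul_inv (Or.inl (by norm_num)) (Or.inl (by norm_num)),
    mul_assoc, ENNReal.inv_mul_cancel (by positivity) ENNReal.ofReal_ne_top, mul_one]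
  norm_num

end PIPaux

open PIPaux

/-- For the skew product `T(x,y) = (x+α, y+x)` on `(ℝ/2πℤ)²` with `α/π` irrational,
the set `A = 𝕋 × [0,π)` satisfies `μ(A ∩ T^{-n}A) = μ(A)² = 1/4` for every nonzero
integer `n` (stated for positive iterates and their inverses via images), where `μ`
is the normalized Lebesgue measure. -/
theorem pairwise_independent_partition (α : ℝ) (hα : Irrational (α / π))
    (T : AddCircle (2 * π) × AddCircle (2 * π) →
         AddCircle (2 * π) × AddCircle (2 * π))
    (hT : T = fun p => (p.1 + (α : AddCircle (2 * π)), p.2 + p.1))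
    (A : Set (AddCircle (2 * π) × AddCircle (2 * π)))
    (hA : A = {p | p.2 ∈ (fun t : ℝ => (t : AddCircle (2 * π))) '' Set.Ico 0 π})
    (μ : Measure (AddCircle (2 * π) × AddCircle (2 * π)))
    (hμ : μ = (ENNReal.ofReal (4 * π ^ 2))⁻¹ •
        ((volume : Measure (AddCircle (2 * π))).prod volume)) :
    ∀ n : ℕ, 0 < n →
      μ (A ∩ T^[n] ⁻¹' A) = 1 / 4 ∧ μ (A ∩ T^[n] '' A) = 1 / 4 := by
  intro n hn
  subst hT hA hμ
  have hnz : (n : ℤ) ≠ 0 := Int.natCast_ne_zero.mpr hn.ne'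
  set θ : 𝕋 := (α : 𝕋) with hθ
  obtain ⟨c, hc⟩ := iterate_formula θ n
  have hAI : {p : 𝕋 × 𝕋 | p.2 ∈ (fun t : ℝ => (t : 𝕋)) '' Set.Ico 0 π}
      = {p : 𝕋 × 𝕋 | p.2 ∈ I} := rfl
  rw [hAI]
  constructor
  · have h1 : {p : 𝕋 × 𝕋 | p.2 ∈ I} ∩
        (fun p : 𝕋 × 𝕋 => (p.1 + θ, p.2 + p.1))^[n] ⁻¹' {p : 𝕋 × 𝕋 | p.2 ∈ I}
        = {p : 𝕋 × 𝕋 | p.2 ∈ I ∧ (n : ℤ) • p.1 + c + p.2 ∈ I} := by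
      ext p
      simp only [Set.mem_inter_iff, Set.mem_preimage, Set.mem_setOf_eq, hc p]
      have he : (n:ℤ) • p.1 + c + p.2 = p.2 + (n:ℤ) • p.1 + c := by abel
      rw [he]
    rw [h1, Measure.smul_apply, key _ hnz, smul_eq_mul, arith]
  · have h2 : (fun p : 𝕋 × 𝕋 => (p.1 + θ, p.2 + p.1))^[n] '' {p : 𝕋 × 𝕋 | p.2 ∈ I}
        = {q : 𝕋 × 𝕋 | (-(n:ℤ)) • q.1 + ((n:ℤ) • ((n:ℤ) • θ) - c) + q.2 ∈ I} := by
      ext q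
      constructor
      · rintro ⟨p, hp, rfl⟩
        rw [hc p]
        show (-(n:ℤ)) • (p.1 + (n:ℤ) • θ) + ((n:ℤ) • ((n:ℤ) • θ) - c)
            + (p.2 + (n:ℤ) • p.1 + c) ∈ I
        have he : (-(n:ℤ)) • (p.1 + (n:ℤ) • θ) + ((n:ℤ) • ((n:ℤ) • θ) - c)
            + (p.2 + (n:ℤ) • p.1 + c) = p.2 := by
          rw [smul_add, neg_smul, neg_smul]
          abel
        rw [he]; exact hp
      · intro hq
        refine ⟨(q.1 - (n:ℤ) • θ, q.2 - (n:ℤ) • (q.1 - (n:ℤ) • θ) - c), ?_, ?_⟩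
        · show q.2 - (n:ℤ) • (q.1 - (n:ℤ) • θ) - c ∈ I
          have he : q.2 - (n:ℤ) • (q.1 - (n:ℤ) • θ) - c
              = (-(n:ℤ)) • q.1 + ((n:ℤ) • ((n:ℤ) • θ) - c) + q.2 := by
            rw [smul_sub, neg_smul]
            abel
          rw [he]; exact hq
        · rw [hc]
          have e1 : q.1 - (n:ℤ) • θ + (n:ℤ) • θ = q.1 := by abel
          have e2 : q.2 - (n:ℤ) • (q.1 - (n:ℤ) • θ) - c
              + (n:ℤ) • (q.1 - (n:ℤ) • θ) + c = q.2 := by abel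
          rw [Prod.mk.injEq]
          exact ⟨e1, e2⟩
    rw [h2]
    have h3 : {p : 𝕋 × 𝕋 | p.2 ∈ I} ∩
        {q : 𝕋 × 𝕋 | (-(n:ℤ)) • q.1 + ((n:ℤ) • ((n:ℤ) • θ) - c) + q.2 ∈ I}
        = {p : 𝕋 × 𝕋 | p.2 ∈ I ∧ (-(n:ℤ)) • p.1 + ((n:ℤ) • ((n:ℤ) • θ) - c) + p.2 ∈ I} := rfl
    rw [h3, Measure.smul_apply, key _ (neg_ne_zero.mpr hnz), smul_eq_mul, arith]
end

section
/- The multiple series Σ over (P₂,P₃,P₄) ∈ (odd ℤ)³ with P₂+P₃+P₄ ≠ 0 of 1/|P₂·P₃·P₄·(P₂+P₃+P₄)| converges (is finite). -/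
lemma sub_key {x y z w : ℝ} (hx : 1 ≤ x) (hy : 1 ≤ y) (hz : 1 ≤ z)
    (hxw : x ≤ w) (hyw : y ≤ w) (hzw : z ≤ w) :
    1/(x*y*z*w) ≤ 1/(x*y*z)^((4:ℝ)/3) := by
  have hxyz : (0:ℝ) < x*y*z := by positivity
  have h1 : (x*y*z)^((4:ℝ)/3) = (x*y*z) * (x*y*z)^((1:ℝ)/3) := by
    rw [show ((4:ℝ)/3) = 1 + 1/3 by norm_num, Real.rpow_add hxyz, Real.rpow_one]
  have hw : (0:ℝ) < w := lt_of_lt_of_le (by linarith) hxw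
  have h2 : (x*y*z)^((1:ℝ)/3) ≤ w := by
    have hc : x*y*z ≤ w^(3:ℕ) := by
      calc x*y*z ≤ w*w*w := by
            apply mul_le_mul (mul_le_mul hxw hyw (by linarith) hw.le) hzw (by linarith)
            positivity
        _ = w^(3:ℕ) := by ring
    calc (x*y*z)^((1:ℝ)/3) ≤ (w^(3:ℕ))^((1:ℝ)/3) :=
          Real.rpow_le_rpow (le_of_lt hxyz) hc (by norm_num)
      _ = w := by
          rw [← Real.rpow_natCast w 3, ← Real.rpow_mul hw.le]
          norm_num
  rw [h1]
  exact one_div_le_one_div_of_le (by positivity) (mul_le_mul_of_nonneg_left h2 hxyz.le)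

lemma key {a b c d : ℝ} (ha : 1 ≤ a) (hb : 1 ≤ b) (hc : 1 ≤ c) (hd : 1 ≤ d) :
    1/(a*b*c*d) ≤ 1/(a*b*c)^((4:ℝ)/3) + 1/(a*b*d)^((4:ℝ)/3)
      + 1/(a*c*d)^((4:ℝ)/3) + 1/(b*c*d)^((4:ℝ)/3) := by
  have n1 : (0:ℝ) ≤ 1/(a*b*c)^((4:ℝ)/3) := by positivity
  have n2 : (0:ℝ) ≤ 1/(a*b*d)^((4:ℝ)/3) := by positivity
  have n3 : (0:ℝ) ≤ 1/(a*c*d)^((4:ℝ)/3) := by positivity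
  have n4 : (0:ℝ) ≤ 1/(b*c*d)^((4:ℝ)/3) := by positivity
  rcases le_total a b with h1 | h1 <;> rcases le_total c d with h2 | h2
  · rcases le_total b d with h3 | h3
    · -- d max
      have := sub_key ha hb hc (h1.trans h3) h3 h2
      have e : 1/(a*b*c*d) = 1/(a*b*c*d) := rfl
      linarith
    · -- b max
      have := sub_key ha hc hd h1 (h2.trans h3) h3
      have e : 1/(a*b*c*d) = 1/(a*c*d*b) := by ring
      linarith
  · rcases le_total b c with h3 | h3
    · -- c max
      have := sub_key ha hb hd (h1.trans h3) h3 h2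
      have e : 1/(a*b*c*d) = 1/(a*b*d*c) := by ring
      linarith
    · -- b max
      have := sub_key ha hc hd h1 h3 (h2.trans h3)
      have e : 1/(a*b*c*d) = 1/(a*c*d*b) := by ring
      linarith
  · rcases le_total a d with h3 | h3
    · -- d max
      have := sub_key ha hb hc h3 (h1.trans h3) h2
      linarith
    · -- a max
      have := sub_key hb hc hd h1 (h2.trans (h3)) h3
      have e : 1/(a*b*c*d) = 1/(b*c*d*a) := by ring
      linarith
  · rcases le_total a c with h3 | h3
    · -- c max
      have := sub_key ha hb hd h3 (h1.trans h3) h2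
      have e : 1/(a*b*c*d) = 1/(a*b*d*c) := by ring
      linarith
    · -- a max
      have := sub_key hb hc hd h1 h3 (h2.trans h3)
      have e : 1/(a*b*c*d) = 1/(b*c*d*a) := by ring
      linarith

private noncomputable def gg (n : ℤ) : ℝ := |(n : ℝ)| ^ (-((4:ℝ)/3))

lemma gg_nonneg (n : ℤ) : 0 ≤ gg n := by unfold gg; positivity

lemma gg_summable : Summable gg :=
  Real.summable_abs_int_rpow (by norm_num)

lemma gg_eq (n : ℤ) : gg n = 1 / |(n:ℝ)| ^ ((4:ℝ)/3) := by
  unfold gg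
  rw [Real.rpow_neg (abs_nonneg _), one_div]

lemma gg_mul3 {p q r : ℤ} :
    gg p * (gg q * gg r) = 1 / (|(p:ℝ)| * |(q:ℝ)| * |(r:ℝ)|) ^ ((4:ℝ)/3) := by
  rw [gg_eq, gg_eq, gg_eq,
    Real.mul_rpow (by positivity) (abs_nonneg _),
    Real.mul_rpow (abs_nonneg _) (abs_nonneg _)]
  ring

set_option maxHeartbeats 1000000 in
open Classical in
/-- The series `Σ_{(P₂,P₃,P₄) odd, P₂+P₃+P₄ ≠ 0} 1/|P₂P₃P₄(P₂+P₃+P₄)|` converges. -/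
theorem summable_odd_triples :
    Summable (fun P : ℤ × ℤ × ℤ =>
      if Odd P.1 ∧ Odd P.2.1 ∧ Odd P.2.2 ∧ P.1 + P.2.1 + P.2.2 ≠ 0 then
        (1 : ℝ) / |(P.1 : ℝ) * P.2.1 * P.2.2 * (P.1 + P.2.1 + P.2.2)|
      else 0) := by
  have hG : Summable (fun x : ℤ × ℤ × ℤ => gg x.1 * (gg x.2.1 * gg x.2.2)) :=
    gg_summable.mul_of_nonneg
      (gg_summable.mul_of_nonneg gg_summable gg_nonneg gg_nonneg)
      gg_nonneg (fun x => mul_nonneg (gg_nonneg _) (gg_nonneg _))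
  have inj2 : Function.Injective
      (fun x : ℤ × ℤ × ℤ => ((x.1, x.2.1, x.1 + x.2.1 + x.2.2) : ℤ × ℤ × ℤ)) := by
    rintro ⟨a, b, c⟩ ⟨a', b', c'⟩ h
    simp only [Prod.mk.injEq] at h ⊢
    omega
  have inj3 : Function.Injective
      (fun x : ℤ × ℤ × ℤ => ((x.1, x.2.2, x.1 + x.2.1 + x.2.2) : ℤ × ℤ × ℤ)) := by
    rintro ⟨a, b, c⟩ ⟨a', b', c'⟩ h
    simp only [Prod.mk.injEq] at h ⊢
    omega
  have inj4 : Function.Injective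
      (fun x : ℤ × ℤ × ℤ => ((x.2.1, x.2.2, x.1 + x.2.1 + x.2.2) : ℤ × ℤ × ℤ)) := by
    rintro ⟨a, b, c⟩ ⟨a', b', c'⟩ h
    simp only [Prod.mk.injEq] at h ⊢
    omega
  have h2 : Summable (fun x : ℤ × ℤ × ℤ =>
      gg x.1 * (gg x.2.1 * gg (x.1 + x.2.1 + x.2.2))) := (hG.comp_injective inj2).congr (fun _ => rfl)
  have h3 : Summable (fun x : ℤ × ℤ × ℤ =>
      gg x.1 * (gg x.2.2 * gg (x.1 + x.2.1 + x.2.2))) := (hG.comp_injective inj3).congr (fun _ => rfl)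
  have h4 : Summable (fun x : ℤ × ℤ × ℤ =>
      gg x.2.1 * (gg x.2.2 * gg (x.1 + x.2.1 + x.2.2))) := (hG.comp_injective inj4).congr (fun _ => rfl)
  refine Summable.of_nonneg_of_le ?_ ?_ (((hG.add h2).add h3).add h4)
  · intro x
    split
    · positivity
    · exact le_refl 0
  · rintro ⟨p, q, r⟩
    dsimp only
    split
    · rename_i h
      obtain ⟨hp, hq, hr, hs⟩ := h
      have hp0 : p ≠ 0 := by rintro rfl; exact (Int.not_odd_iff_even.mpr Even.zero) hp
      have hq0 : q ≠ 0 := by rintro rfl; exact (Int.not_odd_iff_even.mpr Even.zero) hq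
      have hr0 : r ≠ 0 := by rintro rfl; exact (Int.not_odd_iff_even.mpr Even.zero) hr
      have ha : (1:ℝ) ≤ |(p:ℝ)| := by
        rw [← Int.cast_abs]; exact_mod_cast Int.one_le_abs hp0
      have hb : (1:ℝ) ≤ |(q:ℝ)| := by
        rw [← Int.cast_abs]; exact_mod_cast Int.one_le_abs hq0
      have hc : (1:ℝ) ≤ |(r:ℝ)| := by
        rw [← Int.cast_abs]; exact_mod_cast Int.one_le_abs hr0
      have hd : (1:ℝ) ≤ |((p:ℝ) + q + r)| := by
        have : ((p:ℝ) + q + r) = ((p + q + r : ℤ) : ℝ) := by push_cast; ring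
        rw [this, ← Int.cast_abs]
        exact_mod_cast Int.one_le_abs hs
      have hlhs : (1:ℝ) / |(p:ℝ) * q * r * ((p:ℝ) + q + r)|
          = 1 / (|(p:ℝ)| * |(q:ℝ)| * |(r:ℝ)| * |((p:ℝ) + q + r)|) := by
        rw [abs_mul, abs_mul, abs_mul]
      have hkey := key ha hb hc hd
      have hsum : (((p + q + r : ℤ)) : ℝ) = (p:ℝ) + q + r := by push_cast; ring
      calc (1:ℝ) / |(p:ℝ) * q * r * ((p:ℝ) + q + r)|
          ≤ 1 / (|(p:ℝ)| * |(q:ℝ)| * |(r:ℝ)|) ^ ((4:ℝ)/3)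
            + 1 / (|(p:ℝ)| * |(q:ℝ)| * |((p:ℝ)+q+r)|) ^ ((4:ℝ)/3)
            + 1 / (|(p:ℝ)| * |(r:ℝ)| * |((p:ℝ)+q+r)|) ^ ((4:ℝ)/3)
            + 1 / (|(q:ℝ)| * |(r:ℝ)| * |((p:ℝ)+q+r)|) ^ ((4:ℝ)/3) := by
              rw [hlhs]; exact hkey
        _ = gg p * (gg q * gg r) + gg p * (gg q * gg (p + q + r))
            + gg p * (gg r * gg (p + q + r)) + gg q * (gg r * gg (p + q + r)) := by
              rw [gg_mul3, gg_mul3, gg_mul3, gg_mul3, hsum]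
    · exact add_nonneg (add_nonneg (add_nonneg
        (mul_nonneg (gg_nonneg _) (mul_nonneg (gg_nonneg _) (gg_nonneg _)))
        (mul_nonneg (gg_nonneg _) (mul_nonneg (gg_nonneg _) (gg_nonneg _))))
        (mul_nonneg (gg_nonneg _) (mul_nonneg (gg_nonneg _) (gg_nonneg _))))
        (mul_nonneg (gg_nonneg _) (mul_nonneg (gg_nonneg _) (gg_nonneg _)))
end
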